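/- arXiv:0709.2330 — 3 statements merged into one kernel-verified Lean document; each statement's English description precedes it below -/
import Mathlib

section
/- Suppose (Z_i) is stationary ergodic with E[Z_1] < 0, and let X_0, X_0' be any two nonnegative random variables, with X_{n+1}=(X_n+Z_{n+1})^+ and X'_{n+1}=(X'_n+Z_{n+1})^+. Then almost surely there exists a finite random time τ such that X_n = X'_n for all n > τ; indeed both equal max{0, Z_n, Z_n+Z_{n-1}, ..., Z_n+...+Z_1} for all large n. -/
/-!
Unrolling the recursion gives `X n = max (M n) (X 0 + S n)` with `S n = Z_n + ⋯ + Z_1` and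
`M n = max {0, Z_n, Z_n + Z_{n-1}, …, S n}`, and `M n` does not depend on the initial condition.
Now `S n` is the Birkhoff sum of `z ↦ z 1` along the shift, and it tends to `-∞` almost surely.
Indeed, put `f = Z_1 + ε` with `ε = -E[Z_1]/2`, and let `M'_n` be the running maxima of the
Birkhoff sums of `f`. Hopf's maximal ergodic lemma gives `∫_{M'_n > 0} f ≥ 0`. The event that the
Birkhoff sums of `f` are unbounded above is shift invariant; if it were conull, `{M'_n > 0}` would
exhaust the space and force `E[f] ≥ 0`. So a.s. `S n + n ε` is bounded above, and
`X 0 + S n < 0 ≤ M n` for all large `n`, for both initial conditions.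
-/

open MeasureTheory Filter

section Birkhoff

variable {α : Type*}

noncomputable def birkhoffMax (T : α → α) (f : α → ℝ) (n : ℕ) : α → ℝ :=
  partialSups (birkhoffSum T f) n

theorem birkhoffMax_apply (T : α → α) (f : α → ℝ) (n : ℕ) (x : α) :
    birkhoffMax T f n x = partialSups (fun k => birkhoffSum T f k x) n :=
  Pi.partialSups_apply _ _ _

theorem birkhoffSum_le_birkhoffMax (T : α → α) (f : α → ℝ) {k n : ℕ} (hk : k ≤ n) :
    birkhoffSum T f k ≤ birkhoffMax T f n :=
  le_partialSups_of_le _ hk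

theorem birkhoffMax_nonneg (T : α → α) (f : α → ℝ) (n : ℕ) (x : α) :
    0 ≤ birkhoffMax T f n x := by
  simpa using birkhoffSum_le_birkhoffMax T f n.zero_le x

theorem birkhoffMax_succ (T : α → α) (f : α → ℝ) (n : ℕ) (x : α) :
    birkhoffMax T f (n + 1) x = max 0 (f x + birkhoffMax T f n (T x)) := by
  simp only [birkhoffMax_apply, partialSups_add_one', Function.comp_def, birkhoffSum_succ',
    partialSups_const_add]
  rfl

theorem birkhoffMax_le_max (T : α → α) (f : α → ℝ) (n : ℕ) (x : α) :
    birkhoffMax T f n x ≤ max 0 (f x + birkhoffMax T f n (T x)) :=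
  birkhoffMax_succ T f n x ▸ partialSups_monotone (birkhoffSum T f) n.le_succ x

theorem bddAbove_birkhoffSum_apply_iff (T : α → α) (f : α → ℝ) (x : α) :
    BddAbove (Set.range fun n => birkhoffSum T f n (T x)) ↔
      BddAbove (Set.range fun n => birkhoffSum T f n x) := by
  simp only [bddAbove_def, Set.forall_mem_range]
  constructor
  · rintro ⟨C, hC⟩
    refine ⟨max 0 (f x + C), fun n => ?_⟩
    cases n with
    | zero => simp
    | succ n => exact birkhoffSum_succ' T f n x ▸ le_max_of_le_right (by linarith [hC n])
  · rintro ⟨C, hC⟩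
    exact ⟨C - f x, fun n => by linarith [hC (n + 1), birkhoffSum_succ' T f n x]⟩

variable [MeasurableSpace α] {T : α → α} {f : α → ℝ}

theorem measurable_birkhoffSum (hT : Measurable T) (hf : Measurable f) (n : ℕ) :
    Measurable (birkhoffSum T f n) :=
  Finset.measurable_sum _ fun i _ => hf.comp (hT.iterate i)

theorem measurable_birkhoffMax (hT : Measurable T) (hf : Measurable f) (n : ℕ) :
    Measurable (birkhoffMax T f n) := by
  rw [birkhoffMax, partialSups_eq_sup'_range]
  exact Finset.measurable_range_sup' fun k _ => measurable_birkhoffSum hT hf k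

theorem integrable_birkhoffMax {μ : Measure α} (hT : MeasurePreserving T μ μ)
    (hf : Integrable f μ) (n : ℕ) : Integrable (birkhoffMax T f n) μ := by
  induction n with
  | zero => simp [birkhoffMax]
  | succ n ih =>
    rw [birkhoffMax, partialSups_add_one]
    exact ih.sup <| integrable_finsetSum _ fun i _ =>
      (hT.iterate i).integrable_comp_of_integrable hf

theorem MeasureTheory.MeasurePreserving.setIntegral_birkhoffMax_pos_nonneg {μ : Measure α}
    (hT : MeasurePreserving T μ μ) (hf : Measurable f) (hfi : Integrable f μ) (n : ℕ) :
    0 ≤ ∫ x in {x | 0 < birkhoffMax T f n x}, f x ∂μ := by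
  set M := birkhoffMax T f n
  have hMm : Measurable M := measurable_birkhoffMax hT.measurable hf n
  have hM : Integrable M μ := integrable_birkhoffMax hT hfi n
  have hMT : Integrable (fun x => M (T x)) μ := hT.integrable_comp_of_integrable hM
  have hs : MeasurableSet {x | 0 < M x} := measurableSet_lt measurable_const hMm
  have hpointwise (x : α) : M x - M (T x) ≤ {x | 0 < M x}.indicator f x := by
    by_cases hx : 0 < M x
    · rw [Set.indicator_of_mem (show x ∈ {x | 0 < M x} from hx)]
      rcases le_max_iff.1 (birkhoffMax_le_max T f n x) with h | h <;> linarith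
    · rw [Set.indicator_of_notMem (show x ∉ {x | 0 < M x} from hx)]
      linarith [not_lt.1 hx, birkhoffMax_nonneg T f n (T x)]
  have hinv : ∫ x, M (T x) ∂μ = ∫ x, M x ∂μ := by
    rw [← integral_map_of_stronglyMeasurable hT.measurable hMm.stronglyMeasurable, hT.map_eq]
  calc 0 = ∫ x, (M x - M (T x)) ∂μ := by rw [integral_sub hM hMT, hinv, sub_self]
    _ ≤ ∫ x, {x | 0 < M x}.indicator f x ∂μ :=
      integral_mono (hM.sub hMT) (hfi.indicator hs) hpointwise
    _ = _ := integral_indicator hs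

theorem Ergodic.ae_bddAbove_birkhoffSum {μ : Measure α} (hT : Ergodic T μ)
    (hf : Measurable f) (hfi : Integrable f μ) (hneg : ∫ x, f x ∂μ < 0) :
    ∀ᵐ x ∂μ, BddAbove (Set.range fun n => birkhoffSum T f n x) := by
  have hmeas := measurableSet_bddAbove_range (measurable_birkhoffSum hT.measurable hf)
  refine (hT.ae_mem_or_ae_notMem hmeas ?_).resolve_right fun hunbdd => ?_
  · ext x
    exact bddAbove_birkhoffSum_apply_iff T f x
  have hs (n : ℕ) : MeasurableSet {x | 0 < birkhoffMax T f n x} :=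
    measurableSet_lt measurable_const (measurable_birkhoffMax hT.measurable hf n)
  have hlim : Tendsto (fun n => ∫ x in {x | 0 < birkhoffMax T f n x}, f x ∂μ) atTop
      (nhds (∫ x, f x ∂μ)) := by
    simp_rw [← integral_indicator (hs _)]
    refine tendsto_integral_of_dominated_convergence (fun x => ‖f x‖)
      (fun n => (hfi.indicator (hs n)).aestronglyMeasurable) hfi.norm
      (fun n => ae_of_all _ fun x => norm_indicator_le_norm_self f x) ?_
    filter_upwards [hunbdd] with x hx
    obtain ⟨_, ⟨k, rfl⟩, hk⟩ := not_bddAbove_iff.1 hx 0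
    refine tendsto_const_nhds.congr' (eventually_atTop.2 ⟨k, fun n hn => ?_⟩)
    have hpos : x ∈ {x | 0 < birkhoffMax T f n x} :=
      hk.trans_le (birkhoffSum_le_birkhoffMax T f hn x)
    exact (Set.indicator_of_mem hpos f).symm
  exact hneg.not_ge <| ge_of_tendsto hlim <| Eventually.of_forall
    (hT.toMeasurePreserving.setIntegral_birkhoffMax_pos_nonneg hf hfi)

theorem Ergodic.ae_tendsto_birkhoffSum_atBot {μ : Measure α} [IsProbabilityMeasure μ]
    (hT : Ergodic T μ) (hf : Measurable f) (hfi : Integrable f μ) (hneg : ∫ x, f x ∂μ < 0) :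
    ∀ᵐ x ∂μ, Tendsto (fun n => birkhoffSum T f n x) atTop atBot := by
  set ε := -(∫ x, f x ∂μ) / 2
  have hε : 0 < ε := by simp only [ε]; linarith
  have hbdd := hT.ae_bddAbove_birkhoffSum (f := fun x => f x + ε) (hf.add_const ε)
    (hfi.add (integrable_const ε)) (by
      rw [integral_add hfi (integrable_const ε), integral_const, probReal_univ, one_smul]
      simp only [ε]; linarith)
  filter_upwards [hbdd] with x ⟨C, hC⟩
  have hle (n : ℕ) : birkhoffSum T f n x ≤ C - n * ε := by
    have := hC ⟨n, rfl⟩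
    simp only [birkhoffSum, Finset.sum_add_distrib, Finset.sum_const, Finset.card_range,
      nsmul_eq_mul] at this
    simp only [birkhoffSum]
    linarith
  refine tendsto_atBot_mono hle (tendsto_atBot_add_const_left _ C ?_)
  exact tendsto_neg_atTop_atBot.comp (tendsto_natCast_atTop_atTop.atTop_mul_const hε)

end Birkhoff

theorem iterate_shift_apply {β : Type*} (k : ℕ) (z : ℤ → β) (i : ℤ) :
    (fun z : ℤ → β => fun i => z (i + 1))^[k] z i = z (i + k) := by
  induction k generalizing z with
  | zero => simp
  | succ k ih => rw [Function.iterate_succ_apply, ih]; push_cast; ring_nf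

theorem birkhoffSum_shift_apply_one (z : ℤ → ℝ) (n : ℕ) :
    birkhoffSum (fun z : ℤ → ℝ => fun i => z (i + 1)) (fun z => z 1) n z =
      ∑ j ∈ Finset.range n, z (n - j) := by
  rw [birkhoffSum, ← Finset.sum_range_reflect]
  refine Finset.sum_congr rfl fun j hj => ?_
  rw [iterate_shift_apply]
  congr 1
  have := Finset.mem_range.1 hj
  omega

theorem sum_range_succ_sub_natCast (z : ℤ → ℝ) (m n : ℕ) :
    ∑ j ∈ Finset.range (m + 1), z ((n + 1 : ℕ) - j) =
      ∑ j ∈ Finset.range m, z (n - j) + z (n + 1) := by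
  rw [Finset.sum_range_succ']
  push_cast
  simp only [add_sub_add_right_eq_sub, sub_zero]

noncomputable def backwardSumMax (z : ℤ → ℝ) (n : ℕ) : ℝ :=
  partialSups (fun m => ∑ j ∈ Finset.range m, z (n - j)) n

theorem backwardSumMax_nonneg (z : ℤ → ℝ) (n : ℕ) : 0 ≤ backwardSumMax z n := by
  have h := le_partialSups_of_le (fun m => ∑ j ∈ Finset.range m, z (n - j)) n.zero_le
  rwa [Finset.sum_range_zero] at h

theorem backwardSumMax_succ (z : ℤ → ℝ) (n : ℕ) :
    backwardSumMax z (n + 1) = max (backwardSumMax z n + z (n + 1)) 0 := by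
  simp only [backwardSumMax, partialSups_add_one', Function.comp_def,
    sum_range_succ_sub_natCast, partialSups_add_const]
  simp [max_comm]

theorem lindley_eq_max_backwardSumMax {z : ℤ → ℝ} {x : ℕ → ℝ} (h0 : 0 ≤ x 0)
    (hx : ∀ n, x (n + 1) = max (x n + z (n + 1)) 0) (n : ℕ) :
    x n = max (backwardSumMax z n) (x 0 + ∑ j ∈ Finset.range n, z (n - j)) := by
  induction n with
  | zero => simp [backwardSumMax, h0]
  | succ n ih =>
    rw [hx, ih, backwardSumMax_succ, sum_range_succ_sub_natCast, ← max_add_add_right,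
      max_right_comm, add_assoc]

theorem eventually_lindley_eq_backwardSumMax {z : ℤ → ℝ} {x : ℕ → ℝ} (h0 : 0 ≤ x 0)
    (hx : ∀ n, x (n + 1) = max (x n + z (n + 1)) 0)
    (hz : Tendsto (fun n : ℕ => ∑ j ∈ Finset.range n, z (n - j)) atTop atBot) :
    ∀ᶠ n in atTop, x n = backwardSumMax z n := by
  filter_upwards [(tendsto_atBot_add_const_left _ (x 0) hz).eventually_lt_atBot 0] with n hn
  rw [lindley_eq_max_backwardSumMax h0 hx]
  exact max_eq_left (hn.le.trans (backwardSumMax_nonneg z n))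

/-- Coupling of two Lindley recursions driven by the same stationary ergodic
noise (coordinate process on the canonical space `ℤ → ℝ` with ergodic shift)
with `E[Z 1] < 0` and arbitrary nonnegative initial conditions: almost surely
there is a finite random time `τ` such that for all `n > τ`, `X n = X' n`, and
both equal `max{0, Z_n, Z_n + Z_{n-1}, …, Z_n + ⋯ + Z_1}`. -/
theorem stmt_4 (μ : Measure (ℤ → ℝ)) [IsProbabilityMeasure μ]
    (hshift : Ergodic (fun z : ℤ → ℝ => fun i => z (i + 1)) μ)
    (hint : Integrable (fun z : ℤ → ℝ => z 1) μ)
    (hmean : (∫ z : ℤ → ℝ, z 1 ∂μ) < 0)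
    (X X' : ℕ → (ℤ → ℝ) → ℝ)
    (hX0 : ∀ᵐ z ∂μ, 0 ≤ X 0 z) (hX0' : ∀ᵐ z ∂μ, 0 ≤ X' 0 z)
    (hX : ∀ n z, X (n + 1) z = max (X n z + z ((n : ℤ) + 1)) 0)
    (hX' : ∀ n z, X' (n + 1) z = max (X' n z + z ((n : ℤ) + 1)) 0) :
    ∀ᵐ z ∂μ, ∃ τ : ℕ, ∀ n, τ < n →
      X n z = X' n z ∧
      X n z = (Finset.range (n + 1)).sup' Finset.nonempty_range_add_one
        (fun m => ∑ j ∈ Finset.range m, z ((n : ℤ) - j)) := by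
  have hsum := hshift.ae_tendsto_birkhoffSum_atBot (measurable_pi_apply 1) hint hmean
  filter_upwards [hX0, hX0', hsum] with z h0 h0' hz
  simp only [birkhoffSum_shift_apply_one] at hz
  obtain ⟨τ, hτ⟩ := eventually_atTop.1 <|
    (eventually_lindley_eq_backwardSumMax (x := (X · z)) h0 (hX · z) hz).and
      (eventually_lindley_eq_backwardSumMax (x := (X' · z)) h0' (hX' · z) hz)
  refine ⟨τ, fun n hn => ?_⟩
  obtain ⟨hXn, hX'n⟩ := hτ n hn.le
  exact ⟨hXn.trans hX'n.symm, hXn.trans (partialSups_eq_sup'_range _ n)⟩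
end

section
/- For each i ≥ 1 and 1 ≤ j ≤ 2^i - 1, the transformation T maps the dyadic interval I_j^i onto I_{j-1}^i as a translation, where I_j^i is the set of r whose first i binary digits, read as the reversed binary expansion of an integer, equal j. Moreover T maps I_0^i \ {0} into I_{2^i-1}^i. -/
noncomputable def binDigit (i : ℕ) (r : ℝ) : ℤ := ⌊r * 2 ^ i⌋ % 2

noncomputable def binTau (r : ℝ) : ℕ := sInf {i | 0 < i ∧ binDigit i r = 1}

/-- The binary odometer `T r = r - 2^{-τ(r)} + ∑_{l=1}^{τ(r)-1} 2^{-l}`. -/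
noncomputable def TOdo (r : ℝ) : ℝ :=
  r - (2 : ℝ)⁻¹ ^ binTau r + ∑ l ∈ Finset.Icc 1 (binTau r - 1), (2 : ℝ)⁻¹ ^ l

/-- The dyadic interval `I_j^i`: the set of `r ∈ [0,1)` whose first `i` binary
digits `r_1, …, r_i` are the bits `j_1, …, j_i` of `j = ∑_{l=1}^i 2^{l-1} j_l`
(reversed-bits labeling). -/
def dyadicI (i j : ℕ) : Set ℝ :=
  {r | r ∈ Set.Ico (0 : ℝ) 1 ∧
    ∀ l, 1 ≤ l → l ≤ i → binDigit l r = if Nat.testBit j (l - 1) then 1 else 0}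

/-!
Write `j = 2^(k+1) u + 2^k`. Every `r ∈ I_j^i` has its first `1` digit at position `k + 1`, so
`T` translates `I_j^i` by `1 - 2^{-k} - 2^{-(k+1)}`. Reading digits off `⌊2^i r⌋`, the interval
`I_j^i` is `[ρ / 2^i, (ρ + 1) / 2^i)`, where `ρ = bitRev i j` reverses the `i` low bits of `j`.
Passing from `j` to `j - 1` clears bit `k` and sets the bits below it, which moves `ρ` by exactly
`2^i` times that translation. For `0 < r < 2^{-i}`, the first `1` digit of `r` is at the position
`t > i` with `2^{-t} ≤ r < 2^{1-t}`, whence `1 - 2^{1-t} ≤ T r < 1`.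
-/

open Set

namespace BinaryOdometer

def bitRev : ℕ → ℕ → ℕ
  | 0, _ => 0
  | i + 1, j => bitRev i (j / 2) + j % 2 * 2 ^ i

lemma bitRev_lt (i j : ℕ) : bitRev i j < 2 ^ i := by
  induction i generalizing j with
  | zero => simp [bitRev]
  | succ i ih =>
    have := ih (j / 2)
    rw [bitRev, pow_succ]
    rcases Nat.mod_two_eq_zero_or_one j with h | h <;> simp only [h] <;> omega

lemma testBit_bitRev {i k : ℕ} (j : ℕ) (hk : k < i) :
    (bitRev i j).testBit k = j.testBit (i - 1 - k) := by
  induction i generalizing j with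
  | zero => omega
  | succ i ih =>
    rw [bitRev, add_comm, mul_comm, Nat.testBit_two_pow_mul_add _ (bitRev_lt i _)]
    split_ifs with hki
    · rw [ih _ hki, Nat.testBit_div_two]
      congr 1
      omega
    · obtain rfl : k = i := by omega
      rcases Nat.mod_two_eq_zero_or_one j with h | h <;>
        simp [Nat.testBit_eq_decide_div_mod_eq, h]

lemma bitRev_add_two_pow_mul_add (n : ℕ) {m v : ℕ} (u : ℕ) (hv : v < 2 ^ m) :
    bitRev (n + m) (2 ^ m * u + v) = bitRev n u + 2 ^ n * bitRev m v := by
  induction m generalizing v with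
  | zero =>
    obtain rfl : v = 0 := by simpa using hv
    simp [bitRev]
  | succ m ih =>
    rw [pow_succ, mul_comm _ 2] at hv
    rw [pow_succ, mul_comm _ 2, mul_assoc, ← add_assoc, bitRev, bitRev,
      show (2 * (2 ^ m * u) + v) / 2 = 2 ^ m * u + v / 2 by omega,
      show (2 * (2 ^ m * u) + v) % 2 = v % 2 by omega, ih (by omega)]
    ring

lemma bitRev_zero (i : ℕ) : bitRev i 0 = 0 := by
  induction i with
  | zero => rfl
  | succ i ih => simp [bitRev, ih]

lemma bitRev_two_pow_sub_one (i : ℕ) : bitRev i (2 ^ i - 1) = 2 ^ i - 1 := by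
  induction i with
  | zero => rfl
  | succ i ih =>
    have := Nat.one_le_two_pow (n := i)
    rw [bitRev, pow_succ, show (2 ^ i * 2 - 1) / 2 = 2 ^ i - 1 by omega,
      show (2 ^ i * 2 - 1) % 2 = 1 by omega, ih]
    omega

lemma bitRev_pred_eq_add (n k u : ℕ) :
    (bitRev (n + (k + 1)) (2 ^ (k + 1) * u + 2 ^ k - 1) : ℝ) =
      bitRev (n + (k + 1)) (2 ^ (k + 1) * u + 2 ^ k) +
        2 ^ (n + (k + 1)) * (1 - 2⁻¹ ^ k - 2⁻¹ ^ (k + 1)) := by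
  have hk : 2 ^ k < 2 ^ (k + 1) := Nat.pow_lt_pow_succ one_lt_two
  have htop : bitRev (k + 1) (2 ^ k) = 1 := by
    have := bitRev_add_two_pow_mul_add 1 1 (m := k) (v := 0) (by positivity)
    rwa [mul_one, add_zero, bitRev_zero, mul_zero, add_zero, add_comm] at this
  have hones : bitRev (k + 1) (2 ^ k - 1) = 2 * (2 ^ k - 1) := by
    have := bitRev_add_two_pow_mul_add 1 0 (m := k) (v := 2 ^ k - 1) (by omega)
    rwa [mul_zero, zero_add, bitRev_zero, zero_add, bitRev_two_pow_sub_one, pow_one,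
      add_comm] at this
  rw [Nat.add_sub_assoc Nat.one_le_two_pow, bitRev_add_two_pow_mul_add _ _ hk,
    bitRev_add_two_pow_mul_add _ _ (by omega), htop, hones, Nat.cast_add, Nat.cast_add]
  push_cast [Nat.one_le_two_pow]
  rw [inv_pow, inv_pow]
  field_simp
  ring

lemma binDigit_eq_testBit {r : ℝ} (hr : 0 ≤ r) {l i : ℕ} (hli : l ≤ i) :
    binDigit l r = if ⌊r * 2 ^ i⌋₊.testBit (i - l) then 1 else 0 := by
  have hscale : r * 2 ^ l = r * 2 ^ i / (2 ^ (i - l) : ℕ) := by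
    rw [eq_div_iff (by positivity), Nat.cast_pow, Nat.cast_ofNat, mul_assoc, ← pow_add,
      Nat.add_sub_cancel' hli]
  rw [binDigit, hscale, Int.floor_div_natCast, ← Int.natCast_floor_eq_floor (by positivity),
    Nat.testBit_eq_decide_div_mod_eq]
  norm_cast
  rcases Nat.mod_two_eq_zero_or_one (⌊r * 2 ^ i⌋₊ / 2 ^ (i - l)) with h | h <;> simp [h]

lemma mem_dyadicI_iff {i j : ℕ} {r : ℝ} :
    r ∈ dyadicI i j ↔ 0 ≤ r ∧ r < 1 ∧ ⌊r * 2 ^ i⌋₊ = bitRev i j := by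
  refine ⟨fun ⟨⟨hr0, hr1⟩, hd⟩ => ⟨hr0, hr1, ?_⟩,
    fun ⟨hr0, hr1, hN⟩ => ⟨⟨hr0, hr1⟩, fun l hl hli => ?_⟩⟩
  · have hN : ⌊r * 2 ^ i⌋₊ < 2 ^ i := by
      rw [Nat.floor_lt (by positivity), Nat.cast_pow, Nat.cast_ofNat]
      exact mul_lt_of_lt_one_left (by positivity) hr1
    refine Nat.eq_of_testBit_eq fun k => ?_
    rcases lt_or_ge k i with hk | hk
    · have hdk := hd (i - k) (by omega) (by omega)
      rw [binDigit_eq_testBit hr0 (Nat.sub_le i k), Nat.sub_sub_self hk.le] at hdk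
      rw [testBit_bitRev j hk, show i - 1 - k = i - k - 1 by omega]
      revert hdk
      cases ⌊r * 2 ^ i⌋₊.testBit k <;> cases j.testBit (i - k - 1) <;> simp
    · have hi := Nat.pow_le_pow_right two_pos hk
      rw [Nat.testBit_lt_two_pow (hN.trans_le hi),
        Nat.testBit_lt_two_pow ((bitRev_lt i j).trans_le hi)]
  · rw [binDigit_eq_testBit hr0 hli, hN, testBit_bitRev j (by omega),
      show i - 1 - (i - l) = l - 1 by omega]

lemma dyadicI_eq_Ico (i j : ℕ) :
    dyadicI i j = Ico ((bitRev i j : ℝ) / 2 ^ i) ((bitRev i j + 1) / 2 ^ i) := by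
  have hpos : (0 : ℝ) < 2 ^ i := by positivity
  ext r
  rw [mem_dyadicI_iff, mem_Ico, div_le_iff₀ hpos, lt_div_iff₀ hpos]
  constructor
  · rintro ⟨hr0, -, hN⟩
    exact (Nat.floor_eq_iff (by positivity)).1 hN
  · rintro ⟨hlo, hhi⟩
    have hr0 : 0 ≤ r := (mul_nonneg_iff_of_pos_right hpos).1 ((Nat.cast_nonneg _).trans hlo)
    have hlt : (bitRev i j + 1 : ℝ) ≤ 2 ^ i := by exact_mod_cast bitRev_lt i j
    refine ⟨hr0, (mul_lt_iff_lt_one_left hpos).1 (hhi.trans_le hlt), ?_⟩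
    exact (Nat.floor_eq_iff (by positivity)).2 ⟨hlo, hhi⟩

lemma binTau_eq {r : ℝ} {t : ℕ} (ht : 0 < t) (hdt : binDigit t r = 1)
    (hlt : ∀ l, 0 < l → l < t → binDigit l r ≠ 1) : binTau r = t :=
  le_antisymm (Nat.sInf_le ⟨ht, hdt⟩)
    (le_csInf ⟨t, ht, hdt⟩ fun l hl => not_lt.1 fun h => hlt l hl.1 h hl.2)

lemma binTau_eq_of_mem_Ico {r : ℝ} {t : ℕ} (ht : 0 < t)
    (hr : r ∈ Ico ((2 : ℝ)⁻¹ ^ t) (2⁻¹ ^ (t - 1))) : binTau r = t := by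
  obtain ⟨hlo, hhi⟩ := hr
  have hr0 : 0 ≤ r := (by positivity : (0 : ℝ) ≤ 2⁻¹ ^ t).trans hlo
  have hcancel (m : ℕ) : (2 : ℝ)⁻¹ ^ m * 2 ^ m = 1 := by rw [← mul_pow]; norm_num
  have hprev : r * 2 ^ (t - 1) < 1 := by
    calc r * 2 ^ (t - 1) < 2⁻¹ ^ (t - 1) * 2 ^ (t - 1) := by gcongr
      _ = 1 := hcancel _
  have hsucc : r * 2 ^ t = 2 * (r * 2 ^ (t - 1)) := by
    rw [← Nat.sub_add_cancel ht, pow_succ, Nat.add_sub_cancel]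
    ring
  refine binTau_eq ht ?_ fun l hl hlt => ?_
  · have hfloor : ⌊r * 2 ^ t⌋ = 1 := by
      refine Int.floor_eq_iff.2 ⟨?_, by push_cast; linarith⟩
      calc ((1 : ℤ) : ℝ) = 2⁻¹ ^ t * 2 ^ t := by rw [hcancel, Int.cast_one]
        _ ≤ r * 2 ^ t := by gcongr
    rw [binDigit, hfloor]
    rfl
  · have hfloor : ⌊r * 2 ^ l⌋ = 0 := by
      refine Int.floor_eq_zero_iff.2 ⟨by positivity, ?_⟩
      calc r * 2 ^ l ≤ r * 2 ^ (t - 1) := by gcongr; norm_num; omega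
        _ < 1 := hprev
    rw [binDigit, hfloor]
    decide

lemma sum_Icc_inv_two_pow (n : ℕ) :
    ∑ l ∈ Finset.Icc 1 n, (2 : ℝ)⁻¹ ^ l = 1 - 2⁻¹ ^ n := by
  induction n with
  | zero => simp
  | succ n ih =>
    rw [Finset.sum_Icc_succ_top (by omega), ih, pow_succ]
    ring

lemma TOdo_eq (r : ℝ) : TOdo r = r + 1 - 2⁻¹ ^ (binTau r - 1) - 2⁻¹ ^ binTau r := by
  rw [TOdo, sum_Icc_inv_two_pow]
  ring

lemma binTau_of_mem_dyadicI {n k u : ℕ} {r : ℝ}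
    (hr : r ∈ dyadicI (n + (k + 1)) (2 ^ (k + 1) * u + 2 ^ k)) : binTau r = k + 1 := by
  have hbit : ∀ m ≤ k, (2 ^ (k + 1) * u + 2 ^ k).testBit m = decide (k = m) := fun m hm => by
    rw [Nat.testBit_two_pow_mul_add _ (Nat.pow_lt_pow_succ one_lt_two), if_pos (by omega),
      Nat.testBit_two_pow]
  refine binTau_eq k.succ_pos ?_ fun l hl hlt => ?_
  · rw [hr.2 (k + 1) (by omega) (by omega), Nat.add_sub_cancel, hbit k le_rfl]
    simp
  · rw [hr.2 l hl (by omega), hbit (l - 1) (by omega), decide_eq_false (by omega)]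
    simp

lemma TOdo_eq_add_of_mem_dyadicI {n k u : ℕ} {r : ℝ}
    (hr : r ∈ dyadicI (n + (k + 1)) (2 ^ (k + 1) * u + 2 ^ k)) :
    TOdo r = r + (1 - 2⁻¹ ^ k - 2⁻¹ ^ (k + 1)) := by
  rw [TOdo_eq, binTau_of_mem_dyadicI hr, Nat.add_sub_cancel]
  ring

lemma image_TOdo_dyadicI (n k u : ℕ) :
    TOdo '' dyadicI (n + (k + 1)) (2 ^ (k + 1) * u + 2 ^ k) =
      dyadicI (n + (k + 1)) (2 ^ (k + 1) * u + 2 ^ k - 1) := by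
  rw [image_congr fun r hr => TOdo_eq_add_of_mem_dyadicI hr, dyadicI_eq_Ico, dyadicI_eq_Ico,
    image_add_const_Ico, bitRev_pred_eq_add]
  congr 1
  · field_simp
  · field_simp
    ring

lemma TOdo_mem_Ico_of_mem_Ioo {i : ℕ} {r : ℝ} (hr : r ∈ Ioo 0 ((2 : ℝ)⁻¹ ^ i)) :
    TOdo r ∈ Ico (1 - 2⁻¹ ^ i) 1 := by
  obtain ⟨hr0, hri⟩ := hr
  have hex : ∃ t, (2 : ℝ)⁻¹ ^ t ≤ r :=
    (exists_pow_lt_of_lt_one hr0 (by norm_num)).imp fun _ => le_of_lt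
  have hlo := Nat.find_spec hex
  have hit : i < Nat.find hex :=
    (pow_lt_pow_iff_right_of_lt_one₀ (by norm_num) (by norm_num)).1 (hlo.trans_lt hri)
  have hhi : r < 2⁻¹ ^ (Nat.find hex - 1) := not_le.1 (Nat.find_min hex (by omega))
  have hmono : (2 : ℝ)⁻¹ ^ (Nat.find hex - 1) ≤ 2⁻¹ ^ i :=
    pow_le_pow_of_le_one (by norm_num) (by norm_num) (by omega)
  rw [TOdo_eq, binTau_eq_of_mem_Ico (by omega) ⟨hlo, hhi⟩]
  have : (0 : ℝ) < 2⁻¹ ^ Nat.find hex := by positivity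
  constructor <;> linarith

lemma image_TOdo_dyadicI_zero_diff_subset (i : ℕ) :
    TOdo '' (dyadicI i 0 \ {0}) ⊆ dyadicI i (2 ^ i - 1) := by
  rintro _ ⟨r, ⟨hr, hr0⟩, rfl⟩
  rw [dyadicI_eq_Ico, bitRev_zero, Nat.cast_zero, zero_div, zero_add, one_div, ← inv_pow] at hr
  have hT := TOdo_mem_Ico_of_mem_Ioo ⟨lt_of_le_of_ne hr.1 (Ne.symm hr0), hr.2⟩
  rw [dyadicI_eq_Ico, bitRev_two_pow_sub_one, Nat.cast_sub Nat.one_le_two_pow]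
  convert hT using 2
  · push_cast [inv_pow]
    field_simp
  · push_cast
    rw [sub_add_cancel, div_self (by positivity)]

end BinaryOdometer

open BinaryOdometer in
theorem stmt_10_general (i j : ℕ) (hj1 : 1 ≤ j) (hj2 : j ≤ 2 ^ i - 1) :
    (∃ c : ℝ, (∀ r ∈ dyadicI i j, TOdo r = r + c) ∧
      TOdo '' dyadicI i j = dyadicI i (j - 1)) ∧
    TOdo '' (dyadicI i 0 \ {0}) ⊆ dyadicI i (2 ^ i - 1) := by
  obtain ⟨k, _, ⟨u, rfl⟩, rfl⟩ := Nat.exists_eq_two_pow_mul_odd (n := j) (by omega)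
  have hki : k < i := by
    have := Nat.le_mul_of_pos_right (2 ^ k) (by omega : 0 < 2 * u + 1)
    exact (Nat.pow_lt_pow_iff_right (a := 2) one_lt_two).1 (by omega)
  obtain ⟨n, rfl⟩ : ∃ n, i = n + (k + 1) := ⟨i - (k + 1), by omega⟩
  rw [show 2 ^ k * (2 * u + 1) = 2 ^ (k + 1) * u + 2 ^ k by ring]
  exact ⟨⟨_, fun r hr => TOdo_eq_add_of_mem_dyadicI hr, image_TOdo_dyadicI n k u⟩,
    image_TOdo_dyadicI_zero_diff_subset _⟩

/-- For `i ≥ 1` and `1 ≤ j ≤ 2^i - 1`, `T` maps `I_j^i` onto `I_{j-1}^i` as a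
translation; moreover `T` maps `I_0^i \ {0}` into `I_{2^i-1}^i`. -/
theorem stmt_10 (i j : ℕ) (hi : 1 ≤ i) (hj1 : 1 ≤ j) (hj2 : j ≤ 2 ^ i - 1) :
    (∃ c : ℝ, (∀ r ∈ dyadicI i j, TOdo r = r + c) ∧
      TOdo '' dyadicI i j = dyadicI i (j - 1)) ∧
    TOdo '' (dyadicI i 0 \ {0}) ⊆ dyadicI i (2 ^ i - 1) :=
  stmt_10_general i j hj1 hj2
end

section
/- For i ≥ 1, the sets A_i = ∪_{j=0}^{2^{i-1}-1} T^{-j}[0, 2^{-2i-1}) and B_i = ∪_{j=2^{i-1}}^{2^i-1} T^{-j}[0, 2^{-2i-1}) are each disjoint unions, and μ(A_i) = μ(B_i) = 2^{-i-2}, where μ is Lebesgue measure. -/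
open MeasureTheory

/-- `Jset i j = [0,1) ∩ T^{-j} [0, 2^{-(2i+1)})`, i.e. the part of the `j`-th
preimage of `I_0^{2i+1}` inside the unit interval. -/
noncomputable def Jset (i j : ℕ) : Set ℝ :=
  Set.Ico (0 : ℝ) 1 ∩ (TOdo^[j] ⁻¹' Set.Ico (0 : ℝ) ((2 : ℝ)⁻¹ ^ (2 * i + 1)))

/-- `A_0 = ∅`, and for `i ≥ 1`, `A_i = ⋃_{j=0}^{2^{i-1}-1} T^{-j} [0, 2^{-2i-1})`. -/
noncomputable def Aset : ℕ → Set ℝ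
  | 0 => ∅
  | i + 1 => ⋃ j ∈ Finset.range (2 ^ i), Jset (i + 1) j

/-- `B_0 = [0, 1/4)`, and for `i ≥ 1`, `B_i = ⋃_{j=2^{i-1}}^{2^i-1} T^{-j} [0, 2^{-2i-1})`. -/
noncomputable def Bset : ℕ → Set ℝ
  | 0 => Set.Ico (0 : ℝ) (1 / 4)
  | i + 1 => ⋃ j ∈ Finset.Ico (2 ^ i) (2 ^ (i + 1)), Jset (i + 1) j

/-- `C_i = A_i ∪ B_i`. -/
noncomputable def Cset (i : ℕ) : Set ℝ := Aset i ∪ Bset i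

/-- `C = ⋃_{i ≥ 0} C_i`. -/
noncomputable def CsetAll : Set ℝ := ⋃ i, Cset i

/-!
Let `v_n(r)` be the number whose binary digits, least significant first, are the first `n`
binary digits of `r`. On `(0, 1)` the odometer turns the first digit `1` of `r` into `0` and the
`0`s before it into `1`s, so `v_n(T r) = v_n(r) - 1 mod 2 ^ n`; and `T 0 = -1`, after which the
orbit goes down through the integers (for an integer `m`, `τ(m) = sInf ∅ = 0`, so `T m = m - 1`).
Hence for `j < 2 ^ n`, `T^j r ∈ [0, 2^{-n})` iff `v_n(r) = j`. A level set of `v_n` is a condition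
on the first `n` digits, i.e. a dyadic interval of length `2^{-n}`. With `n = 2i + 1` the sets
`T^{-j}[0, 2^{-n})` are therefore disjoint of measure `2^{-2i-1}`, and `A_i`, `B_i` are unions of
`2^{i-1}` of them.
-/

open Set

lemma binDigit_eq_zero_or_one (i : ℕ) (r : ℝ) : binDigit i r = 0 ∨ binDigit i r = 1 := by
  unfold binDigit; omega

lemma binDigit_intCast {i : ℕ} (hi : 0 < i) (m : ℤ) : binDigit i m = 0 := by
  have hfloor : ⌊(m : ℝ) * 2 ^ i⌋ = m * 2 ^ i := by exact_mod_cast Int.floor_intCast (m * 2 ^ i)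
  rw [binDigit, hfloor, ← Nat.succ_pred_eq_of_pos hi, pow_succ, ← mul_assoc, Int.mul_emod_left]

lemma floor_mul_two_pow_succ (r : ℝ) (n : ℕ) :
    ⌊r * 2 ^ (n + 1)⌋ = 2 * ⌊r * 2 ^ n⌋ + binDigit (n + 1) r := by
  set x := r * 2 ^ n
  have hx : r * 2 ^ (n + 1) = 2 * x := by ring
  have hlo : 2 * ⌊x⌋ ≤ ⌊2 * x⌋ := by
    rw [Int.le_floor]; push_cast; linarith [Int.floor_le x]
  have hhi : ⌊2 * x⌋ < 2 * ⌊x⌋ + 2 := by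
    rw [Int.floor_lt]; push_cast; linarith [Int.lt_floor_add_one x]
  rw [binDigit, hx]
  omega

lemma floor_eq_iff_mem_Ico {c : ℝ} (hc : 0 < c) (r : ℝ) (k : ℤ) :
    ⌊r * c⌋ = k ↔ r ∈ Ico (k / c) ((k + 1) / c) := by
  rw [Int.floor_eq_iff, mem_Ico, div_le_iff₀ hc, lt_div_iff₀ hc]

lemma floor_mul_two_pow_eq_zero {r : ℝ} (hr : r ∈ Ico 0 1) {m : ℕ}
    (h : ∀ l, 0 < l → l ≤ m → binDigit l r = 0) : ⌊r * 2 ^ m⌋ = 0 := by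
  induction m with
  | zero => simpa [Int.floor_eq_zero_iff] using hr
  | succ m ih =>
    rw [floor_mul_two_pow_succ, ih fun l hl hlm => h l hl (by omega), h (m + 1) (by omega) le_rfl]
    rfl

lemma binTau_spec {r : ℝ} (hr0 : 0 < r) (hr1 : r < 1) :
    0 < binTau r ∧ binDigit (binTau r) r = 1 ∧ ∀ l, 0 < l → l < binTau r → binDigit l r = 0 := by
  have hne : {i | 0 < i ∧ binDigit i r = 1}.Nonempty := by
    by_contra hempty
    obtain ⟨m, hm⟩ := exists_pow_lt_of_lt_one hr0 (by norm_num : (2 : ℝ)⁻¹ < 1)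
    have hfloor := floor_mul_two_pow_eq_zero ⟨hr0.le, hr1⟩ (m := m) fun l hl _ =>
      (binDigit_eq_zero_or_one l r).resolve_right fun h1 => hempty ⟨l, hl, h1⟩
    have := ((floor_eq_iff_mem_Ico (by positivity) r 0).1 hfloor).2
    rw [inv_pow, inv_eq_one_div] at hm
    push_cast at this
    linarith
  obtain ⟨hpos, hdigit⟩ := Nat.sInf_mem hne
  exact ⟨hpos, hdigit, fun l hl hlt => (binDigit_eq_zero_or_one l r).resolve_right
    fun h1 => (Nat.sInf_le (show l ∈ {i | 0 < i ∧ binDigit i r = 1} from ⟨hl, h1⟩)).not_gt hlt⟩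

lemma binTau_intCast (m : ℤ) : binTau m = 0 := by
  rw [binTau, Nat.sInf_eq_zero]
  right
  ext l
  simp only [mem_ofPred_eq, mem_empty_iff_false, iff_false, not_and]
  intro hl
  simp [binDigit_intCast hl]

lemma TOdo_intCast (m : ℤ) : TOdo m = m - 1 := by
  simp [TOdo, binTau_intCast]

lemma TOdo_iterate_zero (j : ℕ) : TOdo^[j] 0 = -j := by
  induction j with
  | zero => simp
  | succ j ih =>
    rw [Function.iterate_succ_apply', ih, show -(j : ℝ) = ((-j : ℤ) : ℝ) by push_cast; rfl,
      TOdo_intCast]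
    push_cast
    ring

lemma sum_Icc_inv_two_pow (m : ℕ) : ∑ l ∈ Finset.Icc 1 m, (2 : ℝ)⁻¹ ^ l = 1 - 2⁻¹ ^ m := by
  induction m with
  | zero => simp
  | succ m ih =>
    rw [Finset.sum_Icc_succ_top (by omega), ih, pow_succ]
    ring

lemma TOdo_eq_of_binTau_pos {r : ℝ} (h : 0 < binTau r) :
    TOdo r = r + 1 - 3 * (2 : ℝ)⁻¹ ^ binTau r := by
  obtain ⟨t, ht⟩ : ∃ t, binTau r = t + 1 := ⟨_, (Nat.succ_pred_eq_of_pos h).symm⟩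
  rw [TOdo, sum_Icc_inv_two_pow, ht, Nat.add_sub_cancel, pow_succ]
  ring

lemma mem_Ico_inv_two_pow_binTau {r : ℝ} (hr0 : 0 < r) (hr1 : r < 1) :
    r ∈ Ico ((2 : ℝ)⁻¹ ^ binTau r) (2 * 2⁻¹ ^ binTau r) := by
  obtain ⟨hpos, hdigit, hbelow⟩ := binTau_spec hr0 hr1
  obtain ⟨t, ht⟩ : ∃ t, binTau r = t + 1 := ⟨_, (Nat.succ_pred_eq_of_pos hpos).symm⟩
  have hfloor : ⌊r * 2 ^ binTau r⌋ = 1 := by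
    rw [ht, floor_mul_two_pow_succ, ← ht, hdigit,
      floor_mul_two_pow_eq_zero ⟨hr0.le, hr1⟩ fun l hl hlt => hbelow l hl (by omega)]
    rfl
  rw [floor_eq_iff_mem_Ico (by positivity)] at hfloor
  simpa [inv_pow, div_eq_mul_inv, one_add_one_eq_two] using hfloor

lemma TOdo_mem_Ico {r : ℝ} (hr0 : 0 < r) (hr1 : r < 1) : TOdo r ∈ Ico 0 1 := by
  obtain ⟨hpos, -⟩ := binTau_spec hr0 hr1
  obtain ⟨hlo, hhi⟩ := mem_Ico_inv_two_pow_binTau hr0 hr1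
  have hhalf : (2 : ℝ)⁻¹ ^ binTau r ≤ 2⁻¹ := pow_le_of_le_one (by norm_num) (by norm_num) hpos.ne'
  rw [TOdo_eq_of_binTau_pos hpos]
  constructor <;> nlinarith

lemma floor_TOdo_mul_two_pow {r : ℝ} (hr0 : 0 < r) (hr1 : r < 1) {l : ℕ} (hl : binTau r ≤ l) :
    ⌊TOdo r * 2 ^ l⌋ = ⌊r * 2 ^ l⌋ + (2 ^ l - 3 * 2 ^ (l - binTau r)) := by
  obtain ⟨hpos, -⟩ := binTau_spec hr0 hr1
  have hshift : TOdo r * 2 ^ l = r * 2 ^ l + ((2 ^ l - 3 * 2 ^ (l - binTau r) : ℤ) : ℝ) := by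
    rw [TOdo_eq_of_binTau_pos hpos]
    push_cast
    rw [pow_sub₀ _ two_ne_zero hl, inv_pow]
    ring
  rw [hshift, Int.floor_add_intCast]

lemma floor_TOdo_mul_two_pow_of_lt {r : ℝ} (hr0 : 0 < r) (hr1 : r < 1) {l : ℕ}
    (hl : l < binTau r) : ⌊TOdo r * 2 ^ l⌋ = 2 ^ l - 1 := by
  obtain ⟨hpos, -⟩ := binTau_spec hr0 hr1
  obtain ⟨hlo, hhi⟩ := mem_Ico_inv_two_pow_binTau hr0 hr1
  have hsmall : 2 * ((2 : ℝ)⁻¹ ^ binTau r * 2 ^ l) ≤ 1 := by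
    rw [inv_pow, inv_mul_eq_div, mul_div_assoc', div_le_one (by positivity), ← pow_succ']
    exact pow_le_pow_right₀ one_le_two hl
  rw [Int.floor_eq_iff, TOdo_eq_of_binTau_pos hpos]
  push_cast
  constructor <;> nlinarith [pow_pos (two_pos : (0 : ℝ) < 2) l]

lemma binDigit_TOdo_of_lt {r : ℝ} (hr0 : 0 < r) (hr1 : r < 1) {l : ℕ} (hl0 : 0 < l)
    (hl : l < binTau r) : binDigit l (TOdo r) = 1 := by
  have heven : (2 : ℤ) ∣ 2 ^ l := dvd_pow_self 2 hl0.ne'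
  rw [binDigit, floor_TOdo_mul_two_pow_of_lt hr0 hr1 hl]
  omega

lemma binDigit_TOdo_binTau {r : ℝ} (hr0 : 0 < r) (hr1 : r < 1) :
    binDigit (binTau r) (TOdo r) = 0 := by
  obtain ⟨hpos, hdigit, -⟩ := binTau_spec hr0 hr1
  have heven : (2 : ℤ) ∣ 2 ^ binTau r := dvd_pow_self 2 hpos.ne'
  rw [binDigit] at hdigit ⊢
  rw [floor_TOdo_mul_two_pow hr0 hr1 le_rfl, Nat.sub_self, pow_zero]
  omega

lemma binDigit_TOdo_of_binTau_lt {r : ℝ} (hr0 : 0 < r) (hr1 : r < 1) {l : ℕ}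
    (hl : binTau r < l) : binDigit l (TOdo r) = binDigit l r := by
  have heven : (2 : ℤ) ∣ 2 ^ l := dvd_pow_self 2 (by omega)
  have heven' : (2 : ℤ) ∣ 2 ^ (l - binTau r) := dvd_pow_self 2 (by omega)
  rw [binDigit, binDigit, floor_TOdo_mul_two_pow hr0 hr1 hl.le]
  omega

/-- The first `n` binary digits of `r`, read as a binary number whose least significant digit is
the first one. -/
noncomputable def revDigits (n : ℕ) (r : ℝ) : ℕ :=
  ∑ l ∈ Finset.range n, (binDigit (l + 1) r).toNat * 2 ^ l

lemma revDigits_succ (n : ℕ) (r : ℝ) :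
    revDigits (n + 1) r = revDigits n r + (binDigit (n + 1) r).toNat * 2 ^ n :=
  Finset.sum_range_succ _ _

lemma revDigits_lt (n : ℕ) (r : ℝ) : revDigits n r < 2 ^ n := by
  induction n with
  | zero => simp [revDigits]
  | succ n ih =>
    rw [revDigits_succ, pow_succ]
    rcases binDigit_eq_zero_or_one (n + 1) r with h | h <;>
      simp only [h, Int.toNat_zero, Int.toNat_one, zero_mul, one_mul] <;> omega

lemma revDigits_zero_right (n : ℕ) : revDigits n 0 = 0 :=
  Finset.sum_eq_zero fun l _ => by simp [binDigit]

lemma revDigits_TOdo {r : ℝ} (hr0 : 0 < r) (hr1 : r < 1) (n : ℕ) :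
    (revDigits n (TOdo r) + 1) % 2 ^ n = revDigits n r := by
  have hdecrement : (n < binTau r → revDigits n r = 0 ∧ revDigits n (TOdo r) + 1 = 2 ^ n) ∧
      (binTau r ≤ n → revDigits n (TOdo r) + 1 = revDigits n r) := by
    obtain ⟨hpos, hdigit, hbelow⟩ := binTau_spec hr0 hr1
    induction n with
    | zero => simp [revDigits, hpos.ne']
    | succ n ih =>
      simp only [revDigits_succ, pow_succ]
      rcases lt_trichotomy (n + 1) (binTau r) with hlt | heq | hgt
      · rw [hbelow _ n.succ_pos hlt, binDigit_TOdo_of_lt hr0 hr1 n.succ_pos hlt]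
        simp only [Int.toNat_zero, Int.toNat_one, zero_mul, one_mul]
        omega
      · rw [heq, hdigit, binDigit_TOdo_binTau hr0 hr1]
        simp only [Int.toNat_zero, Int.toNat_one, zero_mul, one_mul]
        omega
      · rw [binDigit_TOdo_of_binTau_lt hr0 hr1 hgt]
        omega
  rcases lt_or_ge n (binTau r) with hlt | hge
  · rw [(hdecrement.1 hlt).2, Nat.mod_self, (hdecrement.1 hlt).1]
  · rw [hdecrement.2 hge, Nat.mod_eq_of_lt (revDigits_lt n r)]

lemma revDigits_TOdo_eq_iff {r : ℝ} (hr0 : 0 < r) (hr1 : r < 1) {n j : ℕ} (hj : j + 1 < 2 ^ n) :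
    revDigits n (TOdo r) = j ↔ revDigits n r = j + 1 := by
  rw [← revDigits_TOdo hr0 hr1 n]
  constructor
  · rintro rfl
    exact Nat.mod_eq_of_lt hj
  · intro h
    rcases Nat.lt_or_eq_of_le (revDigits_lt n (TOdo r)) with hlt | heq
    · rw [Nat.mod_eq_of_lt hlt] at h
      omega
    · rw [Nat.succ_eq_add_one] at heq
      rw [heq, Nat.mod_self] at h
      omega

lemma exists_revDigits_eq_iff_floor_eq {n j : ℕ} (hj : j < 2 ^ n) :
    ∃ k : ℕ, k < 2 ^ n ∧ ∀ r ∈ Ico (0 : ℝ) 1, revDigits n r = j ↔ ⌊r * 2 ^ n⌋ = k := by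
  induction n generalizing j with
  | zero =>
    refine ⟨0, Nat.one_pos, fun r hr => ?_⟩
    simp_all [revDigits, Int.floor_eq_zero_iff]
  | succ n ih =>
    obtain ⟨j', b, hj', hb, rfl⟩ : ∃ j' b : ℕ, j' < 2 ^ n ∧ b ≤ 1 ∧ j = j' + 2 ^ n * b :=
      ⟨j % 2 ^ n, j / 2 ^ n, Nat.mod_lt _ (by positivity),
        Nat.lt_succ_iff.1 (Nat.div_lt_of_lt_mul (by rwa [← pow_succ])), (Nat.mod_add_div _ _).symm⟩
    obtain ⟨k', hk', hiff⟩ := ih hj'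
    refine ⟨2 * k' + b, by rw [pow_succ]; interval_cases b <;> omega, fun r hr => ?_⟩
    have hiff := hiff r hr
    have hlt := revDigits_lt n r
    rw [revDigits_succ, floor_mul_two_pow_succ]
    rcases binDigit_eq_zero_or_one (n + 1) r with hd | hd <;> interval_cases b <;>
      simp only [hd, Int.toNat_zero, Int.toNat_one] <;> push_cast <;> omega

lemma revDigits_eq_zero_iff {r : ℝ} (hr : r ∈ Ico (0 : ℝ) 1) (n : ℕ) :
    revDigits n r = 0 ↔ r < 2⁻¹ ^ n := by
  obtain ⟨k, -, hk⟩ := exists_revDigits_eq_iff_floor_eq (pow_pos two_pos n)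
  have hk0 : (k : ℤ) = 0 := by
    simpa using ((hk 0 ⟨le_rfl, one_pos⟩).1 (revDigits_zero_right n)).symm
  rw [hk r hr, hk0, floor_eq_iff_mem_Ico (by positivity)]
  simp [hr.1, inv_pow]

lemma TOdo_iterate_mem_Ico_iff {n j : ℕ} (hj : j < 2 ^ n) {r : ℝ} (hr : r ∈ Ico (0 : ℝ) 1) :
    TOdo^[j] r ∈ Ico 0 (2⁻¹ ^ n) ↔ revDigits n r = j := by
  induction j generalizing r with
  | zero => simp [hr.1, revDigits_eq_zero_iff hr]
  | succ j ih =>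
    rcases hr.1.eq_or_lt with rfl | hpos
    · rw [TOdo_iterate_zero, revDigits_zero_right]
      simp only [mem_Ico, Nat.cast_add, Nat.cast_one]
      constructor
      · rintro ⟨h, -⟩; linarith [(j.cast_nonneg : (0 : ℝ) ≤ j)]
      · omega
    · rw [Function.iterate_succ_apply, ih (by omega) (TOdo_mem_Ico hpos hr.2),
        revDigits_TOdo_eq_iff hpos hr.2 hj]

lemma Jset_eq_Ico {i j : ℕ} (hj : j < 2 ^ (2 * i + 1)) :
    ∃ k : ℕ, Jset i j = Ico ((k : ℝ) / 2 ^ (2 * i + 1)) ((k + 1) / 2 ^ (2 * i + 1)) := by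
  obtain ⟨k, hk, hiff⟩ := exists_revDigits_eq_iff_floor_eq hj
  have hpow : (0 : ℝ) < 2 ^ (2 * i + 1) := by positivity
  have hsub : Ico ((k : ℝ) / 2 ^ (2 * i + 1)) ((k + 1) / 2 ^ (2 * i + 1)) ⊆ Ico 0 1 := by
    have hk' : (k : ℝ) + 1 ≤ 2 ^ (2 * i + 1) := by exact_mod_cast hk
    exact Ico_subset_Ico (by positivity) ((div_le_one hpow).2 hk')
  refine ⟨k, Subset.antisymm (fun r hr' => ?_) fun r hr => ⟨hsub hr, ?_⟩⟩
  · obtain ⟨hr, hmem⟩ := hr'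
    have := (hiff r hr).1 ((TOdo_iterate_mem_Ico_iff hj hr).1 hmem)
    simpa using (floor_eq_iff_mem_Ico hpow r k).1 this
  · refine (TOdo_iterate_mem_Ico_iff hj (hsub hr)).2 ((hiff r (hsub hr)).2 ?_)
    exact (floor_eq_iff_mem_Ico hpow r k).2 (by simpa using hr)

lemma volume_Jset {i j : ℕ} (hj : j < 2 ^ (2 * i + 1)) :
    volume (Jset i j) = 2⁻¹ ^ (2 * i + 1) := by
  obtain ⟨k, hk⟩ := Jset_eq_Ico hj
  rw [hk, Real.volume_Ico, ← sub_div, add_sub_cancel_left, one_div, ← inv_pow,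
    ENNReal.ofReal_pow (by norm_num), ENNReal.ofReal_inv_of_pos two_pos, ENNReal.ofReal_ofNat]

lemma pairwiseDisjoint_Jset (i : ℕ) :
    PairwiseDisjoint (Finset.range (2 ^ (2 * i + 1)) : Set ℕ) (Jset i) := by
  intro j hj j' hj' hne
  simp only [Finset.coe_range, mem_Iio] at hj hj'
  refine disjoint_left.2 fun r ⟨hr, hmem⟩ ⟨_, hmem'⟩ => hne ?_
  rw [← (TOdo_iterate_mem_Ico_iff hj hr).1 hmem, ← (TOdo_iterate_mem_Ico_iff hj' hr).1 hmem']

lemma volume_biUnion_Jset {i : ℕ} {s : Finset ℕ} (hs : s ⊆ Finset.range (2 ^ (2 * i + 1))) :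
    volume (⋃ j ∈ s, Jset i j) = s.card * 2⁻¹ ^ (2 * i + 1) := by
  have hlt : ∀ j ∈ s, j < 2 ^ (2 * i + 1) := fun j hj => Finset.mem_range.1 (hs hj)
  rw [measure_biUnion_finset ((pairwiseDisjoint_Jset i).subset (by exact_mod_cast hs))
    fun j hj => ?_, Finset.sum_congr rfl fun j hj => volume_Jset (hlt j hj), Finset.sum_const,
    nsmul_eq_mul]
  obtain ⟨k, hk⟩ := Jset_eq_Ico (hlt j hj)
  exact hk ▸ measurableSet_Ico

lemma two_pow_mul_inv_two_pow (m : ℕ) :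
    (2 : ENNReal) ^ m * 2⁻¹ ^ (2 * (m + 1) + 1) = 2⁻¹ ^ (m + 1 + 2) := by
  rw [show 2 * (m + 1) + 1 = m + (m + 1 + 2) by ring, pow_add, ← mul_assoc, ← mul_pow,
    ENNReal.mul_inv_cancel two_ne_zero ENNReal.ofNat_ne_top, one_pow, one_mul]

/-- For `i ≥ 1`: the sets `T^{-j}[0,2^{-2i-1})` (within `[0,1)`) for
`0 ≤ j < 2^i` are pairwise disjoint, so `A_i` and `B_i` are disjoint unions,
and `μ(A_i) = μ(B_i) = 2^{-i-2}`. -/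
theorem stmt_13 (i : ℕ) (hi : 1 ≤ i) :
    Set.PairwiseDisjoint (Finset.range (2 ^ i) : Set ℕ) (fun j => Jset i j) ∧
    volume (Aset i) = (2 : ENNReal)⁻¹ ^ (i + 2) ∧
    volume (Bset i) = (2 : ENNReal)⁻¹ ^ (i + 2) := by
  obtain ⟨m, rfl⟩ : ∃ m, i = m + 1 := ⟨i - 1, by omega⟩
  have hrange : Finset.range (2 ^ (m + 1)) ⊆ Finset.range (2 ^ (2 * (m + 1) + 1)) :=
    Finset.range_subset_range.2 (Nat.pow_le_pow_right two_pos (by omega))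
  have hhalf : 2 ^ m ≤ 2 ^ (m + 1) := Nat.pow_le_pow_right two_pos (by omega)
  refine ⟨(pairwiseDisjoint_Jset (m + 1)).subset (by exact_mod_cast hrange), ?_, ?_⟩
  · rw [Aset, volume_biUnion_Jset ((Finset.range_subset_range.2 hhalf).trans hrange),
      Finset.card_range, Nat.cast_pow, Nat.cast_ofNat, two_pow_mul_inv_two_pow]
  · have hcard : (Finset.Ico (2 ^ m) (2 ^ (m + 1))).card = 2 ^ m := by
      rw [Nat.card_Ico, pow_succ]; omega
    have hsub : Finset.Ico (2 ^ m) (2 ^ (m + 1)) ⊆ Finset.range (2 ^ (m + 1)) :=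
      fun j hj => Finset.mem_range.2 (Finset.mem_Ico.1 hj).2
    rw [Bset, volume_biUnion_Jset (hsub.trans hrange),
      hcard, Nat.cast_pow, Nat.cast_ofNat, two_pow_mul_inv_two_pow]
end
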